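/- arXiv:2505.03072 — 2 statements merged into one kernel-verified Lean document; each statement's English description precedes it below -/
import Mathlib

section
/- Two-sided discrete Gaussian tail bound: For every integer m ≥ 1 and every real σ > 0, if X is distributed according to the discrete Gaussian N_ℤ(σ²) and Z is distributed according to the centered real Gaussian measure N(0, σ²), then Pr[|X| ≥ m] ≤ Pr[|Z| ≥ m − 1]. -/
/-!
By Poisson summation, `∑_{n ∈ ℤ} exp(-n²/(2σ²)) = √(2πσ²) · ∑_{n ∈ ℤ} exp(-2π²σ²n²)`, and the
second sum is at least its `n = 0` term `1`. So the normalising constant of `N_ℤ(σ²)` is at least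
that of `N(0, σ²)`, and the discrete mass at `x` is at most the Gaussian density at `x`. As the
density decreases in `|z|`, its value at an integer `x ≠ 0` is at most its integral over the unit
interval from `x` towards `0`; for `|x| ≥ m` these intervals are disjoint and lie in
`{|z| ≥ m - 1}`.
-/

open scoped ENNReal
open ProbabilityTheory

/-- The discrete Gaussian mass function `N_ℤ(v)` (real-valued) with variance
parameter `v = σ²`. -/
noncomputable def discreteGaussianPMF (v : ℝ) (x : ℤ) : ℝ :=
  Real.exp (-(x : ℝ) ^ 2 / (2 * v)) / ∑' y : ℤ, Real.exp (-(y : ℝ) ^ 2 / (2 * v))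

open scoped NNReal
open Function MeasureTheory Real Set

lemma summable_exp_neg_mul_int_sq {b : ℝ} (hb : 0 < b) :
    Summable fun n : ℤ => exp (-b * (n : ℝ) ^ 2) := by
  have hnat : Summable fun n : ℕ => exp (-b * (n : ℝ) ^ 2) :=
    summable_exp_nat_mul_of_ge (neg_lt_zero.2 hb) fun n => by
      exact_mod_cast Nat.le_self_pow two_ne_zero n
  exact Summable.of_nat_of_neg (by simpa using hnat) (by simpa using hnat)

lemma sqrt_two_pi_mul_le_tsum_exp_neg_sq_div {v : ℝ} (hv : 0 < v) :
    √(2 * π * v) ≤ ∑' n : ℤ, exp (-(n : ℝ) ^ 2 / (2 * v)) := by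
  have ha : 0 < (2 * π * v)⁻¹ := by positivity
  have hpoisson := Real.tsum_exp_neg_mul_int_sq ha
  have hexponent (n : ℤ) : -π * (2 * π * v)⁻¹ * (n : ℝ) ^ 2 = -(n : ℝ) ^ 2 / (2 * v) := by
    field_simp
  have hscale : (1 : ℝ) / (2 * π * v)⁻¹ ^ (1 / 2 : ℝ) = √(2 * π * v) := by
    rw [← sqrt_eq_rpow, sqrt_inv, one_div, inv_inv]
  have hdual : 1 ≤ ∑' n : ℤ, exp (-π / (2 * π * v)⁻¹ * (n : ℝ) ^ 2) := by
    simpa [neg_div] using (summable_exp_neg_mul_int_sq (div_pos pi_pos ha)).le_tsum 0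
      fun _ _ => (exp_pos _).le
  simp only [hexponent, hscale] at hpoisson
  rw [hpoisson]
  exact le_mul_of_one_le_right (sqrt_nonneg _) hdual

lemma summable_discreteGaussianPMF {v : ℝ} (hv : 0 < v) : Summable (discreteGaussianPMF v) := by
  have hexponent (x : ℤ) : -(x : ℝ) ^ 2 / (2 * v) = -(2 * v)⁻¹ * (x : ℝ) ^ 2 := by ring
  refine ((summable_exp_neg_mul_int_sq (by positivity : 0 < (2 * v)⁻¹)).div_const
    (∑' y : ℤ, exp (-(y : ℝ) ^ 2 / (2 * v)))).congr fun x => ?_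
  rw [discreteGaussianPMF, hexponent]

lemma discreteGaussianPMF_nonneg (v : ℝ) (x : ℤ) : 0 ≤ discreteGaussianPMF v x :=
  div_nonneg (exp_pos _).le (tsum_nonneg fun _ => (exp_pos _).le)

lemma discreteGaussianPMF_le_gaussianPDFReal {v : ℝ≥0} (hv : v ≠ 0) (x : ℤ) :
    discreteGaussianPMF v x ≤ gaussianPDFReal 0 v x := by
  rw [discreteGaussianPMF, gaussianPDFReal, sub_zero, inv_mul_eq_div]
  exact div_le_div_of_nonneg_left (exp_pos _).le (by positivity)
    (sqrt_two_pi_mul_le_tsum_exp_neg_sq_div (by positivity))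

lemma antitoneOn_gaussianPDF (μ : ℝ) (v : ℝ≥0) : AntitoneOn (gaussianPDF μ v) (Ici μ) := by
  intro a ha b _ hab
  have : 0 ≤ a - μ := sub_nonneg.2 ha
  simp only [gaussianPDF, gaussianPDFReal]
  gcongr

lemma monotoneOn_gaussianPDF (μ : ℝ) (v : ℝ≥0) : MonotoneOn (gaussianPDF μ v) (Iic μ) := by
  intro a _ b hb hab
  have : 0 ≤ μ - b := sub_nonneg.2 hb
  simp only [gaussianPDF, gaussianPDFReal, ← neg_sub μ, neg_sq]
  gcongr

lemma setLIntegral_Ioi_comp_neg (f : ℝ → ℝ≥0∞) (a : ℝ) :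
    ∫⁻ z in Ioi a, f (-z) = ∫⁻ z in Iio (-a), f z := by
  simpa using (Measure.measurePreserving_neg (volume : Measure ℝ)).setLIntegral_comp_preimage_emb
    (Homeomorph.neg ℝ).measurableEmbedding f (Iio (-a))

lemma AntitoneOn.tsum_ite_le_setLIntegral_Ioi {f : ℝ → ℝ≥0∞} {m : ℤ}
    (hf : AntitoneOn f (Ioi ((m : ℝ) - 1))) :
    ∑' x : ℤ, (if m ≤ x then f x else 0) ≤ ∫⁻ z in Ioi ((m : ℝ) - 1), f z := by
  have hcover : ⋃ x : ℤ, Ioc ((x : ℝ) - 1) x = univ := by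
    simpa [neg_add_eq_sub] using iUnion_Ioc_add_intCast (-1 : ℝ)
  have hdisj : Pairwise (Disjoint on fun x : ℤ => Ioc ((x : ℝ) - 1) x) := by
    simpa [neg_add_eq_sub] using pairwise_disjoint_Ioc_add_intCast (-1 : ℝ)
  rw [← lintegral_indicator measurableSet_Ioi, ← setLIntegral_univ, ← hcover,
    lintegral_iUnion (fun _ => measurableSet_Ioc) hdisj]
  refine ENNReal.tsum_le_tsum fun x => ?_
  split_ifs with hx
  · have hmx : (m : ℝ) ≤ x := by exact_mod_cast hx
    calc f x = ∫⁻ _ in Ioc ((x : ℝ) - 1) x, f x := by simp [Real.volume_Ioc]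
      _ ≤ ∫⁻ z in Ioc ((x : ℝ) - 1) x, (Ioi ((m : ℝ) - 1)).indicator f z := by
        refine setLIntegral_mono' measurableSet_Ioc fun z hz => ?_
        have hzm : z ∈ Ioi ((m : ℝ) - 1) := by simp only [mem_Ioi]; linarith [hz.1]
        rw [indicator_of_mem hzm]
        exact hf hzm (by simp only [mem_Ioi]; linarith) hz.2
  · exact zero_le

lemma tsum_ite_abs_le_setLIntegral {f : ℝ → ℝ≥0∞} {m : ℤ} (hm : 1 ≤ m)
    (hanti : AntitoneOn f (Ioi ((m : ℝ) - 1))) (hmono : MonotoneOn f (Iio (1 - (m : ℝ)))) :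
    ∑' x : ℤ, (if m ≤ |x| then f x else 0) ≤ ∫⁻ z in {z : ℝ | (m : ℝ) - 1 ≤ |z|}, f z := by
  have hsplit (x : ℤ) : (if m ≤ |x| then f x else 0) =
      (if m ≤ x then f x else 0) + (if m ≤ -x then f x else 0) := by
    rcases le_total 0 x with hx | hx
    · rw [abs_of_nonneg hx, if_neg (by omega : ¬m ≤ -x), add_zero]
    · rw [abs_of_nonpos hx, if_neg (by omega : ¬m ≤ x), zero_add]
  have hneg : ∑' x : ℤ, (if m ≤ -x then f x else 0) ≤ ∫⁻ z in Iio (1 - (m : ℝ)), f z := by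
    rw [← (Equiv.neg ℤ).tsum_eq, ← neg_sub (m : ℝ) 1, ← setLIntegral_Ioi_comp_neg]
    simpa using AntitoneOn.tsum_ite_le_setLIntegral_Ioi (f := fun z => f (-z)) (m := m)
      fun a ha b hb hab => hmono (by simp only [mem_Ioi, mem_Iio] at hb ⊢; linarith)
        (by simp only [mem_Ioi, mem_Iio] at ha ⊢; linarith) (neg_le_neg hab)
  have hdisj : Disjoint (Ioi ((m : ℝ) - 1)) (Iio (1 - (m : ℝ))) := by
    have : (1 : ℝ) ≤ m := by exact_mod_cast hm
    exact Ioi_disjoint_Iio_iff.2 (by linarith)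
  calc ∑' x : ℤ, (if m ≤ |x| then f x else 0)
      = (∑' x : ℤ, if m ≤ x then f x else 0) + ∑' x : ℤ, if m ≤ -x then f x else 0 := by
        simp_rw [hsplit]; exact ENNReal.tsum_add
    _ ≤ (∫⁻ z in Ioi ((m : ℝ) - 1), f z) + ∫⁻ z in Iio (1 - (m : ℝ)), f z :=
        add_le_add hanti.tsum_ite_le_setLIntegral_Ioi hneg
    _ = ∫⁻ z in Ioi ((m : ℝ) - 1) ∪ Iio (1 - (m : ℝ)), f z :=
        (lintegral_union measurableSet_Iio hdisj).symm
    _ ≤ ∫⁻ z in {z : ℝ | (m : ℝ) - 1 ≤ |z|}, f z := by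
        refine lintegral_mono_set (union_subset (fun z hz => ?_) fun z hz => ?_)
        · exact (le_of_lt hz).trans (le_abs_self z)
        · have : z < 1 - m := hz
          show (m : ℝ) - 1 ≤ |z|
          linarith [neg_le_abs z]

/-- Two-sided discrete Gaussian tail bound: for integer `m ≥ 1`,
`Pr[|X| ≥ m] ≤ Pr[|Z| ≥ m - 1]` where `X ∼ N_ℤ(σ²)` and `Z ∼ N(0, σ²)`. -/
theorem discreteGaussian_two_sided_tail (m : ℤ) (hm : 1 ≤ m) (σ : ℝ) (hσ : 0 < σ) :
    ENNReal.ofReal (∑' x : ℤ, if m ≤ |x| then discreteGaussianPMF (σ ^ 2) x else 0)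
      ≤ gaussianReal 0 ((σ ^ 2).toNNReal) {z : ℝ | (m : ℝ) - 1 ≤ |z|} := by
  set v := (σ ^ 2).toNNReal
  have hv : v ≠ 0 := by simpa [v] using hσ.ne'
  have hvσ : (v : ℝ) = σ ^ 2 := Real.coe_toNNReal _ (sq_nonneg σ)
  have htail_nonneg (x : ℤ) : 0 ≤ if m ≤ |x| then discreteGaussianPMF v x else 0 :=
    ite_nonneg (discreteGaussianPMF_nonneg _ _) le_rfl
  have htail_summable : Summable fun x : ℤ => if m ≤ |x| then discreteGaussianPMF v x else 0 :=
    .of_nonneg_of_le htail_nonneg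
      (fun x => by split_ifs; exacts [le_rfl, discreteGaussianPMF_nonneg _ _])
      (summable_discreteGaussianPMF (by positivity))
  have hm' : (1 : ℝ) ≤ m := by exact_mod_cast hm
  rw [← hvσ, ENNReal.ofReal_tsum_of_nonneg htail_nonneg htail_summable, gaussianReal_apply 0 hv]
  calc ∑' x : ℤ, ENNReal.ofReal (if m ≤ |x| then discreteGaussianPMF v x else 0)
      ≤ ∑' x : ℤ, if m ≤ |x| then gaussianPDF 0 v x else 0 := by
        refine ENNReal.tsum_le_tsum fun x => ?_
        split_ifs
        exacts [ENNReal.ofReal_le_ofReal (discreteGaussianPMF_le_gaussianPDFReal hv x), by simp]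
    _ ≤ ∫⁻ z in {z : ℝ | (m : ℝ) - 1 ≤ |z|}, gaussianPDF 0 v z :=
        tsum_ite_abs_le_setLIntegral hm
          ((antitoneOn_gaussianPDF 0 v).mono (Ioi_subset_Ici (by linarith)))
          ((monotoneOn_gaussianPDF 0 v).mono (Iio_subset_Iic (by linarith)))
end

section
/- The discrete Gaussian is sub-Gaussian with parameter σ²: For every real σ > 0 and every real t, if X is distributed according to the discrete Gaussian N_ℤ(σ²), then the moment generating function satisfies E[exp(t·X)] ≤ exp(σ²·t²/2). -/
/-!
Poisson summation rewrites the tilted theta sum `∑ exp (-π a n² + 2π b n)` as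
`a^(-1/2) ∑ exp (-π (n + i b)² / a)`. Each term of the dual sum has modulus
`exp (π b² / a) · exp (-π n² / a)`, so the triangle inequality and Poisson summation for the
untilted sum bound the tilted sum by `exp (π b² / a) ∑ exp (-π a n²)`; with `π a = 1 / (2 σ²)`
and `2 π b = t` this is the claimed bound on the moment generating function.
-/

open Complex Real

lemma summable_exp_neg_mul_int_sq_s15 {c : ℝ} (hc : 0 < c) :
    Summable fun n : ℤ ↦ Real.exp (-c * (n : ℝ) ^ 2) := by
  convert summable_pow_mul_jacobiTheta₂_term_bound 0 (div_pos hc pi_pos) 0 using 2 with n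
  field_simp
  ring_nf

lemma norm_cexp_neg_div_mul_add_I_mul_sq (a b x : ℝ) :
    ‖cexp (-π / a * (x + I * b) ^ 2)‖ = Real.exp (π * b ^ 2 / a) * Real.exp (-π / a * x ^ 2) := by
  have hcoeff : (-π / a : ℂ) = ((-π / a : ℝ) : ℂ) := by push_cast; rfl
  have hre : ((x + I * b) ^ 2).re = x ^ 2 - b ^ 2 := by simp [sq]
  rw [Complex.norm_exp, ← Real.exp_add, hcoeff, re_ofReal_mul, hre]
  congr 1
  ring

lemma tsum_exp_neg_quadratic_le {a : ℝ} (ha : 0 < a) (b : ℝ) :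
    ∑' n : ℤ, Real.exp (-π * a * n ^ 2 + 2 * π * b * n)
      ≤ Real.exp (π * b ^ 2 / a) * ∑' n : ℤ, Real.exp (-π * a * n ^ 2) := by
  have hcast : ((∑' n : ℤ, Real.exp (-π * a * n ^ 2 + 2 * π * b * n) : ℝ) : ℂ)
      = ∑' n : ℤ, cexp (-π * a * n ^ 2 + 2 * π * b * n) := by
    push_cast [ofReal_tsum]
    rfl
  have hnorm (n : ℤ) : ‖cexp (-π / a * (n + I * b) ^ 2)‖
      = Real.exp (π * b ^ 2 / a) * Real.exp (-π / a * n ^ 2) := by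
    exact_mod_cast norm_cexp_neg_div_mul_add_I_mul_sq a b n
  have hsummable : Summable fun n : ℤ ↦ ‖cexp (-π / a * (n + I * b) ^ 2)‖ := by
    refine ((summable_exp_neg_mul_int_sq_s15 (div_pos pi_pos ha)).mul_left
      (Real.exp (π * b ^ 2 / a))).congr fun n ↦ ?_
    rw [hnorm, neg_div]
  have hroot : ‖1 / (a : ℂ) ^ (1 / 2 : ℂ)‖ = 1 / a ^ (1 / 2 : ℝ) := by
    rw [norm_div, norm_one, ← ofReal_one, ← ofReal_ofNat, ← ofReal_div, ← ofReal_cpow ha.le,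
      norm_real, norm_of_nonneg (by positivity)]
  calc ∑' n : ℤ, Real.exp (-π * a * n ^ 2 + 2 * π * b * n)
      = ‖∑' n : ℤ, cexp (-π * a * n ^ 2 + 2 * π * b * n)‖ := by
        rw [← hcast, norm_real, Real.norm_of_nonneg (tsum_nonneg fun n ↦ (Real.exp_pos _).le)]
    _ = ‖1 / (a : ℂ) ^ (1 / 2 : ℂ) * ∑' n : ℤ, cexp (-π / a * (n + I * b) ^ 2)‖ := by
        rw [Complex.tsum_exp_neg_quadratic (by simpa using ha)]
    _ ≤ 1 / a ^ (1 / 2 : ℝ) * ∑' n : ℤ, ‖cexp (-π / a * (n + I * b) ^ 2)‖ := by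
        rw [norm_mul, hroot]
        gcongr
        exact norm_tsum_le_tsum_norm hsummable
    _ = Real.exp (π * b ^ 2 / a) * (1 / a ^ (1 / 2 : ℝ) * ∑' n : ℤ, Real.exp (-π / a * n ^ 2)) := by
        simp only [hnorm, tsum_mul_left]
        ring
    _ = Real.exp (π * b ^ 2 / a) * ∑' n : ℤ, Real.exp (-π * a * n ^ 2) := by
        rw [Real.tsum_exp_neg_mul_int_sq ha]

lemma tsum_exp_mul_mul_exp_neg_sq_div_le {v : ℝ} (hv : 0 < v) (t : ℝ) :
    ∑' n : ℤ, Real.exp (t * n) * Real.exp (-(n : ℝ) ^ 2 / (2 * v))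
      ≤ Real.exp (v * t ^ 2 / 2) * ∑' n : ℤ, Real.exp (-(n : ℝ) ^ 2 / (2 * v)) := by
  obtain ⟨a, ha⟩ : ∃ a, π * a = 1 / (2 * v) := ⟨1 / (2 * π * v), by field_simp⟩
  have ha_pos : 0 < a := pos_of_mul_pos_right (ha ▸ by positivity) pi_pos.le
  have hgauss (n : ℤ) : -(n : ℝ) ^ 2 / (2 * v) = -π * a * n ^ 2 := by
    rw [neg_mul, ha]
    ring
  calc ∑' n : ℤ, Real.exp (t * n) * Real.exp (-(n : ℝ) ^ 2 / (2 * v))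
      = ∑' n : ℤ, Real.exp (-π * a * n ^ 2 + 2 * π * (t / (2 * π)) * n) := by
        refine tsum_congr fun n ↦ ?_
        rw [← Real.exp_add, hgauss]
        congr 1
        field_simp
        ring
    _ ≤ Real.exp (π * (t / (2 * π)) ^ 2 / a) * ∑' n : ℤ, Real.exp (-π * a * n ^ 2) :=
        tsum_exp_neg_quadratic_le ha_pos _
    _ = Real.exp (v * t ^ 2 / 2) * ∑' n : ℤ, Real.exp (-(n : ℝ) ^ 2 / (2 * v)) := by
        have hexponent : π * (t / (2 * π)) ^ 2 / a = t ^ 2 / (4 * (π * a)) := by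
          field_simp
          ring
        simp only [hexponent, ha, hgauss]
        congr 2
        field_simp
        ring

/-- The discrete Gaussian is sub-Gaussian with parameter `σ²`:
`E[exp (t X)] ≤ exp (σ² t² / 2)` for `X ∼ N_ℤ(σ²)`. -/
theorem discreteGaussian_subGaussian (σ : ℝ) (hσ : 0 < σ) (t : ℝ) :
    (∑' x : ℤ, Real.exp (t * (x : ℝ)) * discreteGaussianPMF (σ ^ 2) x)
      ≤ Real.exp (σ ^ 2 * t ^ 2 / 2) := by
  have hv : 0 < σ ^ 2 := pow_pos hσ 2
  have hsummable : Summable fun n : ℤ ↦ Real.exp (-(n : ℝ) ^ 2 / (2 * σ ^ 2)) := by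
    refine (summable_exp_neg_mul_int_sq_s15 (c := 1 / (2 * σ ^ 2)) (by positivity)).congr fun n ↦ ?_
    ring_nf
  have hnormalizer : 0 < ∑' n : ℤ, Real.exp (-(n : ℝ) ^ 2 / (2 * σ ^ 2)) :=
    hsummable.tsum_pos (fun n ↦ (Real.exp_pos _).le) 0 (Real.exp_pos _)
  simp only [discreteGaussianPMF, ← mul_div_assoc, tsum_div_const]
  rw [div_le_iff₀ hnormalizer]
  exact tsum_exp_mul_mul_exp_neg_sq_div_le hv t
end
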